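/- Let G be a bidirected graph and let {uα, vβ} be a pair of vertex-sides. Then {uα, vβ} is a snarl of G if and only if there is a sign-cut graph F of G such that {uα, vβ} is a snarl of F. -/

import Mathlib

/-!
Bidirected graphs.  A vertex-side is a vertex with a sign (`true` = `+`, `false` = `−`);
a bidirected edge is an unordered pair of vertex-sides (an element of `Sym2 (V × Bool)`).
-/

namespace Paper

variable {V : Type}

/-- A vertex-side: a vertex together with a sign (`true` = `+`, `false` = `−`). -/
abbrev Side (V : Type) := V × Bool

/-- A bidirected graph on the vertex type `V`: a vertex set together with a set of
bidirected edges, each an unordered pair of vertex-sides with endpoints in `verts`. -/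
structure BDGraph (V : Type) where
  verts : Set V
  E : Set (Sym2 (Side V))
  wf : ∀ e ∈ E, ∀ x ∈ e, Prod.fst x ∈ verts

namespace BDGraph

/-- `(u, α)` is a vertex-side of `G`, i.e. some edge of `G` is incident to `u`
with sign `α`. -/
def HasSide (G : BDGraph V) (u : V) (α : Bool) : Prop :=
  ∃ e ∈ G.E, (u, α) ∈ e

/-- Adjacency in the underlying undirected graph `U(G)` (signs ignored). -/
def uadj (G : BDGraph V) (a b : V) : Prop :=
  ∃ e ∈ G.E, ∃ σ τ : Bool, e = s((a, σ), (b, τ))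

/-- Connectivity (reachability) in the underlying undirected graph `U(G)`. -/
def uReach (G : BDGraph V) (a b : V) : Prop :=
  Relation.ReflTransGen G.uadj a b

/-- `v` is a tip of `G`: no two edges of `G` are incident to `v` with different signs. -/
def IsTip (G : BDGraph V) (v : V) : Prop :=
  ∀ e ∈ G.E, ∀ f ∈ G.E, ∀ σ : Bool, (v, σ) ∈ e → (v, !σ) ∈ f → False

/-- `v` is a tip of `G` with sign `α`: every edge of `G` incident to `v` carries the
sign `α` at `v`. -/
def IsTipWith (G : BDGraph V) (v : V) (α : Bool) : Prop :=
  ∀ e ∈ G.E, ∀ σ : Bool, (v, σ) ∈ e → σ = α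

/-- Deletion of the vertex `x` (and all edges incident to it). -/
def deleteVert (G : BDGraph V) (x : V) : BDGraph V where
  verts := G.verts \ {x}
  E := {e | e ∈ G.E ∧ ∀ y : Side V, y ∈ e → y.1 ≠ x}
  wf := by
    rintro e ⟨he, hne⟩ y hy
    exact ⟨G.wf e he y hy, hne y hy⟩

/-- Deletion of a single edge. -/
def deleteEdge (G : BDGraph V) (e₀ : Sym2 (Side V)) : BDGraph V where
  verts := G.verts
  E := G.E \ {e₀}
  wf := by
    rintro e ⟨he, -⟩ y hy
    exact G.wf e he y hy

/-- `x` is a cutvertex of (the underlying undirected graph of) `G`: some two other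
vertices are connected in `G` but no longer connected after deleting `x`. -/
def IsCutvertex (G : BDGraph V) (x : V) : Prop :=
  x ∈ G.verts ∧ ∃ a ∈ G.verts, ∃ b ∈ G.verts, a ≠ x ∧ b ≠ x ∧
    G.uReach a b ∧ ¬ (G.deleteVert x).uReach a b

/-- `G` is connected (underlying undirected graph, nonempty). -/
def Conn (G : BDGraph V) : Prop :=
  G.verts.Nonempty ∧ ∀ a ∈ G.verts, ∀ b ∈ G.verts, G.uReach a b

/-- `H` is a subgraph of `G`. -/
def IsSubgraphOf (H G : BDGraph V) : Prop :=
  H.verts ⊆ G.verts ∧ H.E ⊆ G.E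

end BDGraph

/-! ### Splitting a pair of vertex-sides

Splitting the vertex-side `u α` detaches all edges incident to `u` with the opposite
sign `!α` and reattaches them to a new vertex `u'`.  We split the two vertex-sides
`u α` and `v β` (`u ≠ v`) simultaneously, realising the two new vertices as `Sum.inr u`
and `Sum.inr v` in the vertex type `V ⊕ V` (original vertices are `Sum.inl`). -/

open Classical in
/-- Where each vertex-side goes under the splitting of `u α` and `v β`. -/
noncomputable def splitMap (u : V) (α : Bool) (v : V) (β : Bool) :
    Side V → Side (V ⊕ V) :=
  fun x =>
    if x = (u, !α) then (Sum.inr u, !α)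
    else if x = (v, !β) then (Sum.inr v, !β)
    else (Sum.inl x.1, x.2)

/-- The graph obtained from `G` by splitting the vertex-sides `u α` and `v β`. -/
noncomputable def BDGraph.split2 (G : BDGraph V) (u : V) (α : Bool) (v : V) (β : Bool) :
    BDGraph (V ⊕ V) where
  verts := (Sum.inl '' G.verts) ∪ {Sum.inr u, Sum.inr v}
  E := Sym2.map (splitMap u α v β) '' G.E
  wf := by
    rintro e ⟨f, hf, rfl⟩ x hx
    rw [Sym2.mem_map] at hx
    obtain ⟨y, hy, rfl⟩ := hx
    by_cases h1 : y = (u, !α)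
    · simp only [splitMap, if_pos h1]
      simp
    · by_cases h2 : y = (v, !β)
      · simp only [splitMap, if_neg h1, if_pos h2]
        simp
      · simp only [splitMap, if_neg h1, if_neg h2]
        exact Set.mem_union_left _ ⟨y.1, G.wf f hf y hy, rfl⟩

/-- The pair of vertex-sides `{u α, v β}` is separable in `G`: after splitting `u α`
and `v β`, there is a connected component containing `u` and `v` but neither of the
two new vertices `u'`, `v'`. -/
noncomputable def Separable (G : BDGraph V) (u : V) (α : Bool) (v : V) (β : Bool) : Prop :=
  u ≠ v ∧
    (G.split2 u α v β).uReach (Sum.inl u) (Sum.inl v) ∧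
    ¬ (G.split2 u α v β).uReach (Sum.inl u) (Sum.inr u) ∧
    ¬ (G.split2 u α v β).uReach (Sum.inl u) (Sum.inr v) ∧
    ¬ (G.split2 u α v β).uReach (Sum.inl v) (Sum.inr u) ∧
    ¬ (G.split2 u α v β).uReach (Sum.inl v) (Sum.inr v)

/-- The vertex set of the snarl component of `{u α, v β}`: the vertices of `G` lying in
the connected component of `u` after splitting `u α` and `v β`. -/
noncomputable def SnarlVerts (G : BDGraph V) (u : V) (α : Bool) (v : V) (β : Bool) :
    Set V :=
  {w | (G.split2 u α v β).uReach (Sum.inl u) (Sum.inl w)}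

/-- The edge set of the snarl component of `{u α, v β}`: the edges of `G` lying (after
splitting) in the connected component of `u`. -/
noncomputable def SnarlEdges (G : BDGraph V) (u : V) (α : Bool) (v : V) (β : Bool) :
    Set (Sym2 (Side V)) :=
  {e | e ∈ G.E ∧ ∀ y : Side V, y ∈ e →
      (G.split2 u α v β).uReach (Sum.inl u) (splitMap u α v β y).1}

/-- `{u α, v β}` is a snarl of `G`: separable, and minimal in the sense that the snarl
component `X` contains no vertex `w ∉ {u,v}` with vertex-sides `w γ`, `w !γ` such that
`{u α, w γ}` and `{w !γ, v β}` are both separable in `G`. -/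
noncomputable def IsSnarl (G : BDGraph V) (u : V) (α : Bool) (v : V) (β : Bool) : Prop :=
  Separable G u α v β ∧
    ¬ ∃ w ∈ SnarlVerts G u α v β, w ≠ u ∧ w ≠ v ∧
        ∃ γ : Bool, Separable G u α w γ ∧ Separable G w (!γ) v β

/-! ### Sign-consistent cutvertices and sign-cut graphs -/

/-- A cutvertex `x` of `G` is sign-consistent if `x` is a tip in `G[V(C) ∪ {x}]` for
every connected component `C` of `G − x` (components are described by a member `a`). -/
def BDGraph.SignConsistent (G : BDGraph V) (x : V) : Prop :=
  G.IsCutvertex x ∧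
    ∀ a ∈ (G.deleteVert x).verts,
      ∀ e ∈ G.E, ∀ f ∈ G.E,
        (∀ y : Side V, y ∈ e → y.1 = x ∨ (G.deleteVert x).uReach a y.1) →
        (∀ y : Side V, y ∈ f → y.1 = x ∨ (G.deleteVert x).uReach a y.1) →
        ∀ σ τ : Bool, (x, σ) ∈ e → (x, τ) ∈ f → σ = τ

open Classical in
/-- After splitting every sign-consistent vertex of `G` and relabelling, the two copies
of a sign-consistent vertex `x` are identified with the pairs `(x, true)`, `(x, false)`;
any other vertex `w` is identified with `(w, true)`.  `scKey G` sends a vertex-side to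
the copy of its vertex that it is attached to. -/
noncomputable def scKey (G : BDGraph V) : Side V → Side V :=
  fun x => if G.SignConsistent x.1 then x else (x.1, true)

lemma scKey_fst (G : BDGraph V) (y : Side V) : (scKey G y).1 = y.1 := by
  unfold scKey
  split <;> rfl

lemma scKey_idem (G : BDGraph V) (y : Side V) : scKey G (scKey G y) = scKey G y := by
  by_cases h : G.SignConsistent y.1
  · simp [scKey, h]
  · simp [scKey, h]

/-- The graph obtained from `G` by simultaneously splitting all sign-consistent
vertices (on the vertex type `V × Bool`, cf. `scKey`). -/
noncomputable def BDGraph.splitAll (G : BDGraph V) : BDGraph (Side V) where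
  verts := {p : Side V | p.1 ∈ G.verts ∧ scKey G p = p}
  E := Sym2.map (fun y : Side V => (scKey G y, y.2)) '' G.E
  wf := by
    rintro e ⟨f, hf, rfl⟩ x hx
    rw [Sym2.mem_map] at hx
    obtain ⟨y, hy, rfl⟩ := hx
    show (scKey G y).1 ∈ G.verts ∧ scKey G (scKey G y) = scKey G y
    exact ⟨by rw [scKey_fst]; exact G.wf f hf y hy, scKey_idem G y⟩

/-- `F` is a sign-cut graph of `G`: one of the graphs obtained by splitting every
sign-consistent vertex of `G` and relabelling each new vertex `y'` back to `y`;
concretely, the subgraph of `G` corresponding to a connected component of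
`G.splitAll`. -/
noncomputable def IsSignCutGraph (G F : BDGraph V) : Prop :=
  ∃ p ∈ G.splitAll.verts,
    F.verts = {w : V | ∃ σ : Bool, (w, σ) ∈ G.splitAll.verts ∧
                  G.splitAll.uReach p (w, σ)} ∧
    F.E = {e | e ∈ G.E ∧ ∀ y : Side V, y ∈ e → G.splitAll.uReach p (scKey G y)}

/-! ### Blocks -/

/-- `H` is a block of `G`: a maximal connected subgraph of `G` without a cutvertex. -/
def IsBlock (G H : BDGraph V) : Prop :=
  H.IsSubgraphOf G ∧ H.Conn ∧ (∀ x, ¬ H.IsCutvertex x) ∧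
    ∀ H' : BDGraph V, H'.IsSubgraphOf G → H.IsSubgraphOf H' → H'.Conn →
      (∀ x, ¬ H'.IsCutvertex x) → H'.verts = H.verts ∧ H'.E = H.E

/-- `H'` is a dangling block of `v` with respect to the block `H`:
a block of `G` different from `H` containing `v` with vertex-sides of opposite
signs at `v`. -/
def IsDanglingBlock (G H : BDGraph V) (v : V) (H' : BDGraph V) : Prop :=
  IsBlock G H' ∧ ¬ (H'.verts = H.verts ∧ H'.E = H.E) ∧ v ∈ H'.verts ∧
    H'.HasSide v true ∧ H'.HasSide v false

/-- `{u,v}` is a separation pair of `H`: some two other vertices of `H` are connected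
in `H` but no longer connected after removing `u` and `v`. -/
def IsSepPairB (H : BDGraph V) (u v : V) : Prop :=
  ∃ a ∈ H.verts, ∃ b ∈ H.verts, a ≠ u ∧ a ≠ v ∧ b ≠ u ∧ b ≠ v ∧
    H.uReach a b ∧ ¬ ((H.deleteVert u).deleteVert v).uReach a b

/-- `{u,v}` is a split pair of `H`: a separation pair of `H` or an edge of `H`. -/
def IsSplitPairB (H : BDGraph V) (u v : V) : Prop :=
  IsSepPairB H u v ∨ ∃ e ∈ H.E, ∃ σ τ : Bool, e = s((u, σ), (v, τ))

/-! ### Bidirected walks, paths and cycloids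

A bidirected walk `{v₁ α₁, v₂ α̂₂}, {v₂ α₂, v₃ α̂₃}, …` is encoded by the list
`[(v₁, α₁), (v₂, α₂), …]` of its *departing* sides: the first entry `(v₁, α₁)` is the
side of `v₁` on the first edge, and for `i ≥ 2` the walk arrives at `vᵢ` with sign
`!αᵢ` and departs with sign `αᵢ` (so the sign alternates at every internal vertex). -/

/-- One step of a bidirected walk, between consecutive departing sides. -/
def BStep (G : BDGraph V) (x y : Side V) : Prop :=
  s(x, (y.1, !y.2)) ∈ G.E

/-- `p` encodes a bidirected walk of `G` (at least one edge). -/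
def IsBWalk (G : BDGraph V) (p : List (Side V)) : Prop :=
  2 ≤ p.length ∧ p.Chain' (BStep G)

/-- `p` encodes a `u α`-`v β` bidirected path of `G`: a bidirected walk without
repeated vertices which starts at `u` with sign `α` and arrives at `v` with sign `β`
(so the last departing side recorded is `(v, !β)`). -/
def IsBPath (G : BDGraph V) (p : List (Side V)) (u : V) (α : Bool) (v : V) (β : Bool) :
    Prop :=
  IsBWalk G p ∧ p.head? = some (u, α) ∧ p.getLast? = some (v, !β) ∧
    (p.map Prod.fst).Nodup

/-- `G` has a cycloid: a closed bidirected walk through pairwise distinct vertices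
whose sign alternates at every vertex, except possibly at one (exceptional) vertex,
which we may take to be the starting vertex.  The closing edge either alternates at
the start vertex (`s(y, (x.1, !x.2))`) or fails to alternate there (`s(y, x)`). -/
def HasCycloid (G : BDGraph V) : Prop :=
  ∃ p : List (Side V), p ≠ [] ∧ (p.map Prod.fst).Nodup ∧ p.Chain' (BStep G) ∧
    ∃ x y : Side V, p.head? = some x ∧ p.getLast? = some y ∧
      (s(y, (x.1, !x.2)) ∈ G.E ∨ s(y, x) ∈ G.E)

/-- `G` has a cycloid with an exceptional vertex: exactly one vertex (the starting
one, after rotation) fails sign alternation. -/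
def HasExceptionalCycloid (G : BDGraph V) : Prop :=
  ∃ p : List (Side V), p ≠ [] ∧ (p.map Prod.fst).Nodup ∧ p.Chain' (BStep G) ∧
    ∃ x y : Side V, p.head? = some x ∧ p.getLast? = some y ∧ s(y, x) ∈ G.E

/-! ### Flipping a vertex -/

open Classical in
/-- Flip the sign of every vertex-side of `u`. -/
noncomputable def flipSide (u : V) : Side V → Side V :=
  fun x => if x.1 = u then (x.1, !x.2) else x

/-- The graph obtained from `G` by flipping the vertex `u` (every positive vertex-side
of `u` becomes negative and vice versa). -/
noncomputable def BDGraph.flip (G : BDGraph V) (u : V) : BDGraph V where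
  verts := G.verts
  E := Sym2.map (flipSide u) '' G.E
  wf := by
    rintro e ⟨f, hf, rfl⟩ x hx
    rw [Sym2.mem_map] at hx
    obtain ⟨y, hy, rfl⟩ := hx
    have h1 : (flipSide u y).1 = y.1 := by
      unfold flipSide
      split <;> rfl
    rw [h1]
    exact G.wf f hf y hy

/-!
Separability is read off edge sets alone (`SepOn`): `u` reaches `v` avoiding the two split
sides, and no side so reached is joined to a split side.

Let `F` be the sign-cut graph containing the side `(u, α)`. A walk of `G` from `u` that leaves
`F` does so at a sign-consistent vertex `x`, across the side of `x` that `F` lacks; since `x` is a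
tip towards every component of `G - x`, whatever lies beyond that side is separated from `F` by
`x` alone. Hence separability in `F` implies separability in `G`. If `v` could not be reached
inside `F`, the exit vertex `x` would split `{u α, v β}` into `{u α, x δ}` and `{x δ̂, v β}`,
against minimality in `G`. Conversely, a vertex `w` splitting the snarl in `G` lies in `F`: were
`w` cut off from `u` and `v` by such an `x`, the walk realising `{w γ̂, v β}` would pass through
`x`, and following it back from `x` to `w` would join the component of `u` to the split side
`(w, γ̂)`.
-/

open Relation

section EdgeSets

variable {W : Type} {E E' : Set (Sym2 (W × Bool))}

def EdgeAdj (E : Set (Sym2 (W × Bool))) (a b : W) : Prop :=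
  ∃ σ τ : Bool, s((a, σ), (b, τ)) ∈ E

def EdgeReach (E : Set (Sym2 (W × Bool))) : W → W → Prop :=
  ReflTransGen (EdgeAdj E)

def avoidVerts (E : Set (Sym2 (W × Bool))) (A : Set W) : Set (Sym2 (W × Bool)) :=
  {e ∈ E | ∀ y ∈ e, y.1 ∉ A}

def avoidSides (E : Set (Sym2 (W × Bool))) (s t : W × Bool) : Set (Sym2 (W × Bool)) :=
  {e ∈ E | s ∉ e ∧ t ∉ e}

lemma BDGraph.uReach_eq (G : BDGraph W) : G.uReach = EdgeReach G.E := by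
  have : G.uadj = EdgeAdj G.E := by
    ext a b
    exact ⟨fun ⟨_, he, σ, τ, h⟩ => ⟨σ, τ, h ▸ he⟩,
      fun ⟨σ, τ, he⟩ => ⟨_, he, σ, τ, rfl⟩⟩
  unfold BDGraph.uReach
  rw [this, EdgeReach]

lemma avoidVerts_subset (E : Set (Sym2 (W × Bool))) (A : Set W) : avoidVerts E A ⊆ E :=
  fun _ he => he.1

lemma avoidSides_subset (E : Set (Sym2 (W × Bool))) (s t : W × Bool) : avoidSides E s t ⊆ E :=
  fun _ he => he.1

lemma avoidVerts_mono {A A' : Set W} (hE : E ⊆ E') (hA : A' ⊆ A) :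
    avoidVerts E A ⊆ avoidVerts E' A' :=
  fun _ he => ⟨hE he.1, fun y hy hA' => he.2 y hy (hA hA')⟩

lemma avoidSides_mono (hE : E ⊆ E') (s t : W × Bool) : avoidSides E s t ⊆ avoidSides E' s t :=
  fun _ he => ⟨hE he.1, he.2⟩

lemma avoidSides_comm (E : Set (Sym2 (W × Bool))) (s t : W × Bool) :
    avoidSides E s t = avoidSides E t s := by
  ext e
  simp only [avoidSides, Set.mem_ofPred_eq, and_comm]

lemma edgeAdj_of_mem {y z : W × Bool} (h : s(y, z) ∈ E) : EdgeAdj E y.1 z.1 :=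
  ⟨y.2, z.2, h⟩

instance : Std.Symm (EdgeAdj E) where
  symm _ _ := fun ⟨σ, τ, h⟩ => ⟨τ, σ, Sym2.eq_swap ▸ h⟩

lemma EdgeAdj.symm {a b : W} (h : EdgeAdj E a b) : EdgeAdj E b a := Std.Symm.symm _ _ h

lemma EdgeAdj.mono (h : E ⊆ E') {a b : W} (hab : EdgeAdj E a b) : EdgeAdj E' a b :=
  let ⟨σ, τ, he⟩ := hab; ⟨σ, τ, h he⟩

namespace EdgeReach

variable {a b c : W}

protected lemma refl (a : W) : EdgeReach E a a := ReflTransGen.refl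

lemma symm (h : EdgeReach E a b) : EdgeReach E b a := ReflTransGen.stdSymm.symm _ _ h

lemma trans (h₁ : EdgeReach E a b) (h₂ : EdgeReach E b c) : EdgeReach E a c :=
  ReflTransGen.trans h₁ h₂

lemma tail (h : EdgeReach E a b) (hbc : EdgeAdj E b c) : EdgeReach E a c :=
  ReflTransGen.tail h hbc

lemma mono (hE : E ⊆ E') (h : EdgeReach E a b) : EdgeReach E' a b :=
  ReflTransGen.mono (fun _ _ => EdgeAdj.mono hE) _ _ h

lemma invariant {P : W → Prop} (hP : ∀ a b, P a → EdgeAdj E a b → P b)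
    (h : EdgeReach E a b) (ha : P a) : P b := by
  induction h with
  | refl => exact ha
  | tail _ hbc ih => exact hP _ _ ih hbc

lemma notMem_of_avoidVerts {A : Set W} (h : EdgeReach (avoidVerts E A) a b) (ha : a ∉ A) :
    b ∉ A := by
  refine invariant (P := (· ∉ A)) ?_ h ha
  rintro _ _ - ⟨_, _, -, hA⟩
  exact hA _ (Sym2.mem_mk_right _ _)

lemma avoidVerts_or_exists_first_edge {A : Set W} (ha : a ∉ A) (h : EdgeReach E a b) :
    EdgeReach (avoidVerts E A) a b ∨
      ∃ x ∈ A, ∃ s z, s((x, s), z) ∈ E ∧ z.1 ∉ A ∧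
        EdgeReach (avoidVerts E A) a z.1 := by
  induction h with
  | refl => exact Or.inl ReflTransGen.refl
  | @tail c d _ hcd ih =>
    rcases ih with ih | ih
    · obtain ⟨σ, τ, he⟩ := hcd
      have hc : c ∉ A := ih.notMem_of_avoidVerts ha
      by_cases hd : d ∈ A
      · exact Or.inr ⟨d, hd, τ, (c, σ), Sym2.eq_swap ▸ he, hc, ih⟩
      · refine Or.inl (ih.tail ⟨σ, τ, he, ?_⟩)
        rintro y hy
        rcases Sym2.mem_iff.1 hy with rfl | rfl <;> assumption
    · exact Or.inr ih

lemma exists_first_edge {A : Set W} (ha : a ∉ A) (hb : b ∈ A) (h : EdgeReach E a b) :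
    ∃ x ∈ A, ∃ s z, s((x, s), z) ∈ E ∧ z.1 ∉ A ∧ EdgeReach (avoidVerts E A) a z.1 :=
  (avoidVerts_or_exists_first_edge ha h).resolve_left
    fun h' => h'.notMem_of_avoidVerts ha hb

lemma reach_of_not_reach_avoidVerts {x : W} (h : EdgeReach E a b)
    (hx : ¬ EdgeReach (avoidVerts E {x}) a b) : EdgeReach E a x := by
  by_cases hax : a = x
  · exact hax ▸ EdgeReach.refl a
  rcases avoidVerts_or_exists_first_edge (A := {x}) hax h with h' | ⟨_, rfl, s, z, he, -, hz⟩
  · exact absurd h' hx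
  · exact (hz.mono (avoidVerts_subset _ _)).tail (edgeAdj_of_mem he).symm

lemma avoidVerts_of_not_reach {x : W} (h : EdgeReach E a b) (hx : ¬ EdgeReach E a x) :
    EdgeReach (avoidVerts E {x}) a b := by
  induction h with
  | refl => exact EdgeReach.refl a
  | @tail c d hac hcd ih =>
    obtain ⟨σ, τ, he⟩ := hcd
    refine ih.tail ⟨σ, τ, he, fun y hy hyx => ?_⟩
    rcases Sym2.mem_iff.1 hy with rfl | rfl
    · exact hx (hyx ▸ hac)
    · exact hx (hyx ▸ hac.tail ⟨σ, τ, he⟩)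

end EdgeReach

end EdgeSets

section Separable

open Sum

variable {G : BDGraph V} {u v w : V} {α β γ : Bool}

/-- A side through which the component of `u` in the graph split at `u α`, `v β` reaches one of
the new vertices. -/
def Leak (E : Set (Sym2 (Side V))) (u : V) (α : Bool) (v : V) (β : Bool) (y : Side V) : Prop :=
  y ≠ (u, !α) ∧ y ≠ (v, !β) ∧ EdgeReach (avoidSides E (u, !α) (v, !β)) u y.1 ∧
    (s((u, !α), y) ∈ E ∨ s((v, !β), y) ∈ E)

def SepOn (E : Set (Sym2 (Side V))) (u : V) (α : Bool) (v : V) (β : Bool) : Prop :=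
  u ≠ v ∧ EdgeReach (avoidSides E (u, !α) (v, !β)) u v ∧ ∀ y, ¬ Leak E u α v β y

lemma splitMap_left : splitMap u α v β (u, !α) = (inr u, !α) := by
  simp [splitMap]

lemma splitMap_right (huv : u ≠ v) : splitMap u α v β (v, !β) = (inr v, !β) := by
  simp [splitMap, huv.symm]

lemma splitMap_of_ne {y : Side V} (h₁ : y ≠ (u, !α)) (h₂ : y ≠ (v, !β)) :
    splitMap u α v β y = (inl y.1, y.2) := by
  simp [splitMap, h₁, h₂]

lemma splitMap_eq_inl {y : Side V} {c : V} {σ : Bool} :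
    splitMap u α v β y = (inl c, σ) ↔ y ≠ (u, !α) ∧ y ≠ (v, !β) ∧ y = (c, σ) := by
  unfold splitMap
  split_ifs <;> simp_all [Prod.ext_iff]

lemma EdgeReach.split2 {a b : V} (h : EdgeReach (avoidSides G.E (u, !α) (v, !β)) a b) :
    EdgeReach (G.split2 u α v β).E (inl a) (inl b) := by
  refine ReflTransGen.lift inl (fun c d ⟨σ, τ, he, hu, hv⟩ => ⟨σ, τ, ?_⟩) a b h
  refine ⟨_, he, ?_⟩
  rw [Sym2.map_mk, splitMap_of_ne, splitMap_of_ne] <;>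
    intro h <;> simp_all

lemma exists_of_edgeAdj_split2 {c : V} {z : V ⊕ V}
    (h : EdgeAdj (G.split2 u α v β).E (inl c) z) :
    ∃ y w, s(y, w) ∈ G.E ∧ y ≠ (u, !α) ∧ y ≠ (v, !β) ∧ y.1 = c ∧
      (splitMap u α v β w).1 = z := by
  obtain ⟨σ, τ, e, he, hmap⟩ := h
  induction e using Sym2.ind with
  | _ y w =>
    rw [Sym2.map_mk, Sym2.eq_iff] at hmap
    rcases hmap with ⟨hy, hw⟩ | ⟨hw, hy⟩
    · obtain ⟨h₁, h₂, rfl⟩ := splitMap_eq_inl.1 hy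
      exact ⟨_, w, he, h₁, h₂, rfl, by rw [hw]⟩
    · obtain ⟨h₁, h₂, rfl⟩ := splitMap_eq_inl.1 hy
      exact ⟨_, y, Sym2.eq_swap ▸ he, h₁, h₂, rfl, by rw [hw]⟩

lemma reach_split2_inl_or_leak {a : V} {z : V ⊕ V}
    (ha : EdgeReach (avoidSides G.E (u, !α) (v, !β)) u a)
    (h : EdgeReach (G.split2 u α v β).E (inl a) z) :
    (∃ c, z = inl c ∧ EdgeReach (avoidSides G.E (u, !α) (v, !β)) u c) ∨
      ∃ y, Leak G.E u α v β y := by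
  refine h.invariant (P := fun z => (∃ c, z = inl c ∧
    EdgeReach (avoidSides G.E (u, !α) (v, !β)) u c) ∨ ∃ y, Leak G.E u α v β y) ?_
    (Or.inl ⟨a, rfl, ha⟩)
  rintro _ z (⟨c, rfl, hc⟩ | hleak) hadj
  · obtain ⟨y, w, he, hy₁, hy₂, rfl, rfl⟩ := exists_of_edgeAdj_split2 hadj
    by_cases hw₁ : w = (u, !α)
    · exact Or.inr ⟨y, hy₁, hy₂, hc, Or.inl (hw₁ ▸ Sym2.eq_swap ▸ he)⟩
    by_cases hw₂ : w = (v, !β)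
    · exact Or.inr ⟨y, hy₁, hy₂, hc, Or.inr (hw₂ ▸ Sym2.eq_swap ▸ he)⟩
    refine Or.inl ⟨w.1, by rw [splitMap_of_ne hw₁ hw₂],
      hc.tail (edgeAdj_of_mem ⟨he, ?_, ?_⟩)⟩ <;> simp [Sym2.mem_iff, Ne.symm, *]
  · exact Or.inr hleak

lemma Leak.reach_split2 (huv : u ≠ v) {y : Side V} (hy : Leak G.E u α v β y) :
    EdgeReach (G.split2 u α v β).E (inl u) (inr u) ∨
      EdgeReach (G.split2 u α v β).E (inl u) (inr v) := by
  obtain ⟨hy₁, hy₂, hr, he | he⟩ := hy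
  · refine Or.inl (hr.split2.tail ⟨y.2, !α, ?_⟩)
    refine ⟨_, he, ?_⟩
    rw [Sym2.map_mk, splitMap_left, splitMap_of_ne hy₁ hy₂, Sym2.eq_swap]
  · refine Or.inr (hr.split2.tail ⟨y.2, !β, ?_⟩)
    refine ⟨_, he, ?_⟩
    rw [Sym2.map_mk, splitMap_right huv, splitMap_of_ne hy₁ hy₂, Sym2.eq_swap]

lemma SepOn.not_reach_split2_inr (hs : SepOn G.E u α v β) (x : V) :
    ¬ EdgeReach (G.split2 u α v β).E (inl u) (inr x) := fun h => by
  rcases reach_split2_inl_or_leak (EdgeReach.refl u) h with ⟨c, hc, -⟩ | ⟨y, hy⟩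
  · exact inr_ne_inl hc
  · exact hs.2.2 y hy

lemma separable_iff_sepOn : Separable G u α v β ↔ SepOn G.E u α v β := by
  rw [Separable, BDGraph.uReach_eq]
  constructor
  · rintro ⟨huv, hpos, hu, hv, -, -⟩
    have hleak : ∀ y, ¬ Leak G.E u α v β y := fun y hy =>
      (hy.reach_split2 huv).elim hu hv
    refine ⟨huv, ?_, hleak⟩
    rcases reach_split2_inl_or_leak (EdgeReach.refl u) hpos with ⟨c, hc, hr⟩ | ⟨y, hy⟩
    · rwa [← inl_injective hc] at hr
    · exact absurd hy (hleak y)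
  · intro hs
    have hpos := hs.2.1.split2
    exact ⟨hs.1, hpos, hs.not_reach_split2_inr u, hs.not_reach_split2_inr v,
      fun h => hs.not_reach_split2_inr u (hpos.trans h),
      fun h => hs.not_reach_split2_inr v (hpos.trans h)⟩

lemma SepOn.mem_snarlVerts_iff (hs : SepOn G.E u α v β) {w : V} :
    w ∈ SnarlVerts G u α v β ↔ EdgeReach (avoidSides G.E (u, !α) (v, !β)) u w := by
  rw [SnarlVerts, Set.mem_ofPred_eq, BDGraph.uReach_eq]
  refine ⟨fun h => ?_, EdgeReach.split2⟩
  rcases reach_split2_inl_or_leak (EdgeReach.refl u) h with ⟨c, hc, hr⟩ | ⟨y, hy⟩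
  · rwa [inl_injective hc]
  · exact absurd hy (hs.2.2 y)

lemma Leak.mono {E E' : Set (Sym2 (Side V))} (hE : E ⊆ E') {y : Side V}
    (h : Leak E u α v β y) : Leak E' u α v β y :=
  let ⟨h₁, h₂, hr, he⟩ := h
  ⟨h₁, h₂, hr.mono (avoidSides_mono hE _ _), he.imp (@hE _) (@hE _)⟩

lemma SepOn.symm {E : Set (Sym2 (Side V))} (hs : SepOn E u α v β) : SepOn E v β u α := by
  obtain ⟨huv, hpos, hleak⟩ := hs
  refine ⟨huv.symm, by rw [avoidSides_comm]; exact hpos.symm, ?_⟩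
  rintro y ⟨hy₁, hy₂, hr, he⟩
  rw [avoidSides_comm] at hr
  exact hleak y ⟨hy₂, hy₁, hpos.trans hr, he.symm⟩

lemma SepOn.left_mem_verts (hs : SepOn G.E u α v β) : u ∈ G.verts := by
  rcases hs.2.1.cases_head with h | ⟨d, ⟨σ, τ, he, -⟩, -⟩
  · exact absurd h hs.1
  · exact G.wf _ he _ (Sym2.mem_mk_left _ _)

lemma SepOn.of_subset_of_reach {E : Set (Sym2 (Side V))} (hE : E ⊆ G.E) {t : Side V}
    (hs : SepOn G.E u α w γ) (h : EdgeReach (avoidSides E (u, !α) t) u w) :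
    SepOn E u α w γ := by
  refine ⟨hs.1, ?_, fun y hy => hs.2.2 y (hy.mono hE)⟩
  obtain ⟨w, rfl, s, z, he, hz, hr⟩ := h.exists_first_edge (A := {w}) hs.1 (Set.mem_singleton w)
  have hr' : EdgeReach (avoidSides E (u, !α) (w, !γ)) u z.1 := by
    refine hr.mono ?_
    rintro e ⟨⟨he, hu, -⟩, hw⟩
    exact ⟨he, hu, fun h => hw _ h rfl⟩
  have hzw : z ≠ (w, !γ) := fun h => hz (congrArg Prod.fst h)
  obtain rfl : s = γ := Bool.ne_not.1 fun hs' => hs.2.2 z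
    ⟨ne_of_mem_of_not_mem (Sym2.mem_mk_right _ _) he.2.1, hzw,
      hr'.mono (avoidSides_mono hE _ _), .inr (hs' ▸ hE he.1)⟩
  have hlast : s((w, s), z) ∈ avoidSides E (u, !α) (w, !s) := by
    refine ⟨he.1, he.2.1, ?_⟩
    rw [Sym2.mem_iff]
    rintro (h | h)
    exacts [Bool.self_ne_not s (congrArg Prod.snd h).symm, hzw h.symm]
  exact hr'.tail (edgeAdj_of_mem hlast).symm

end Separable

section SignConsistent

variable {G : BDGraph V} {x : V}

/-- `c` lies in a component of `G - x` that some edge of `G` attaches to `x` with sign `σ`. -/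
def Behind (G : BDGraph V) (x : V) (σ : Bool) (c : V) : Prop :=
  ∃ z : Side V, s((x, σ), z) ∈ G.E ∧ z.1 ≠ x ∧ EdgeReach (avoidVerts G.E {x}) z.1 c

lemma behind_of_mem {σ : Bool} {z : Side V} (he : s((x, σ), z) ∈ G.E) (hz : z.1 ≠ x) :
    Behind G x σ z.1 :=
  ⟨z, he, hz, EdgeReach.refl _⟩

namespace Behind

variable {σ : Bool} {c d : V}

lemma ne (h : Behind G x σ c) : c ≠ x := by
  obtain ⟨z, -, hz, hr⟩ := h
  simpa using hr.notMem_of_avoidVerts (A := {x}) hz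

lemma mem_verts (h : Behind G x σ c) : c ∈ G.verts := by
  obtain ⟨z, he, -, hr⟩ := h
  refine hr.invariant (P := (· ∈ G.verts)) ?_ (G.wf _ he z (Sym2.mem_mk_right _ _))
  rintro _ _ - ⟨σ, τ, he', -⟩
  exact G.wf _ he' _ (Sym2.mem_mk_right _ _)

lemma reach (h : Behind G x σ c) (hcd : EdgeReach (avoidVerts G.E {x}) c d) :
    Behind G x σ d :=
  let ⟨z, he, hz, hr⟩ := h; ⟨z, he, hz, hr.trans hcd⟩

lemma tail {y w : Side V} (h : Behind G x σ y.1) (he : s(y, w) ∈ G.E) (hw : w.1 ≠ x) :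
    Behind G x σ w.1 := by
  refine h.reach (.single (edgeAdj_of_mem ⟨he, fun p hp => ?_⟩))
  rcases Sym2.mem_iff.1 hp with rfl | rfl
  exacts [h.ne, hw]

end Behind

namespace BDGraph.SignConsistent

lemma sign_eq (hx : G.SignConsistent x) {σ τ : Bool} {c : V} (hσ : Behind G x σ c)
    (hτ : Behind G x τ c) : σ = τ := by
  have hc : c ∈ (G.deleteVert x).verts := ⟨hσ.mem_verts, hσ.ne⟩
  obtain ⟨z, he, -, hz⟩ := hσ
  obtain ⟨z', he', -, hz'⟩ := hτ
  refine hx.2 c hc _ he _ he' ?_ ?_ σ τ (Sym2.mem_mk_left _ _) (Sym2.mem_mk_left _ _) <;>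
    rintro y hy <;> rcases Sym2.mem_iff.1 hy with rfl | rfl <;>
    simp only [BDGraph.uReach_eq, true_or]
  · exact Or.inr hz.symm
  · exact Or.inr hz'.symm

lemma opposite_sides_notMem (hx : G.SignConsistent x) (σ : Bool) :
    s((x, σ), (x, !σ)) ∉ G.E := by
  intro he
  obtain ⟨-, a, ha, -, -, hax, -⟩ := hx.1
  have hall : ∀ y ∈ s((x, σ), (x, !σ)), y.1 = x ∨ (G.deleteVert x).uReach a y.1 := by
    rintro y hy
    rcases Sym2.mem_iff.1 hy with rfl | rfl <;> exact Or.inl rfl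
  simpa using hx.2 a ⟨ha, hax⟩ _ he _ he hall hall σ (!σ)
    (Sym2.mem_mk_left _ _) (Sym2.mem_mk_right _ _)

lemma not_reach_of_behind (hx : G.SignConsistent x) {σ : Bool} {a b : V}
    (ha : Behind G x σ a) (hb : Behind G x (!σ) b) :
    ¬ EdgeReach (avoidVerts G.E {x}) a b :=
  fun h => Bool.self_ne_not σ (hx.sign_eq (ha.reach h) hb)

lemma eq_or_not_behind_of_mem (hx : G.SignConsistent x) {ε : Bool} {y z : Side V}
    (he : s(y, z) ∈ G.E) (hy : y ≠ (x, ε)) (h : y.1 = x ∨ ¬ Behind G x ε y.1) :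
    z.1 = x ∨ ¬ Behind G x ε z.1 := by
  by_cases hzx : z.1 = x
  · exact .inl hzx
  refine .inr fun hz => ?_
  by_cases hyx : y.1 = x
  · obtain ⟨y₁, y₂⟩ := y
    obtain rfl : y₁ = x := hyx
    obtain rfl : y₂ = !ε := Bool.eq_not_iff.2 fun h => hy (h ▸ rfl)
    exact Bool.not_ne_self ε (hx.sign_eq (behind_of_mem he hzx) hz)
  · exact (h.resolve_left hyx) (hz.tail (Sym2.eq_swap ▸ he) hyx)

end BDGraph.SignConsistent

end SignConsistent

section Cutvertex

variable {G : BDGraph V} {x u v w : V} {α β γ : Bool}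

/-- On its way from `u` to `x`, a walk first enters `x` through the side facing `u`. -/
lemma reach_avoidSides_of_behind (hx : G.SignConsistent x) {t : Side V} {δ : Bool}
    (h : EdgeReach (avoidSides G.E (u, !α) t) u x) (hu : Behind G x δ u) :
    EdgeReach (avoidSides G.E (u, !α) (x, !δ)) u x := by
  obtain ⟨x, rfl, σ, z, he, hz, hr⟩ :=
    h.exists_first_edge (A := {x}) hu.ne (Set.mem_singleton x)
  obtain rfl : σ = δ := hx.sign_eq
    ⟨z, he.1, hz, (hr.mono (avoidVerts_mono (avoidSides_subset _ _ _) le_rfl)).symm⟩ hu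
  have hlast : s((x, σ), z) ∈ avoidSides G.E (u, !α) (x, !σ) := by
    refine ⟨he.1, he.2.1, ?_⟩
    rw [Sym2.mem_iff]
    rintro (h | h)
    exacts [Bool.self_ne_not σ (congrArg Prod.snd h).symm, hz (congrArg Prod.fst h).symm]
  refine (hr.mono ?_).tail (edgeAdj_of_mem hlast).symm
  rintro e ⟨⟨he, hu, -⟩, hex⟩
  exact ⟨he, hu, fun h => hex _ h rfl⟩

lemma SepOn.sepOn_of_behind (hs : SepOn G.E u α v β) (hx : G.SignConsistent x) {δ : Bool}
    (hux : EdgeReach (avoidSides G.E (u, !α) (v, !β)) u x)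
    (hu : Behind G x δ u) (hv : Behind G x (!δ) v) : SepOn G.E u α x δ := by
  have hne : ∀ c, (c = x ∨ ¬ Behind G x (!δ) c) → c ≠ v := by
    rintro c hc rfl
    rcases hc with h | h
    exacts [hv.ne h, h hv]
  -- a walk avoiding the side `(x, !δ)` never gets behind it, so it never meets `v`
  have hP : ∀ c, EdgeReach (avoidSides G.E (u, !α) (x, !δ)) u c →
      EdgeReach (avoidSides G.E (u, !α) (v, !β)) u c ∧ (c = x ∨ ¬ Behind G x (!δ) c) := by
    refine fun c hc => hc.invariant (P := fun c =>
      EdgeReach (avoidSides G.E (u, !α) (v, !β)) u c ∧ (c = x ∨ ¬ Behind G x (!δ) c)) ?_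
      ⟨.refl u, .inr fun h => Bool.self_ne_not δ (hx.sign_eq hu h)⟩
    rintro a b ⟨ha, ha'⟩ ⟨σ, τ, he, h₁, h₂⟩
    have hb' := hx.eq_or_not_behind_of_mem (y := (a, σ)) (z := (b, τ)) he
      (ne_of_mem_of_not_mem (Sym2.mem_mk_left _ _) h₂) ha'
    refine ⟨ha.tail ⟨σ, τ, he, h₁, ?_⟩, hb'⟩
    rw [Sym2.mem_iff]
    rintro (h | h)
    exacts [hne a ha' (congrArg Prod.fst h).symm, hne b hb' (congrArg Prod.fst h).symm]
  refine ⟨hu.ne, reach_avoidSides_of_behind hx hux hu, ?_⟩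
  rintro y ⟨hy₁, hy₂, hr, he | he⟩ <;> obtain ⟨hr', hy⟩ := hP _ hr
  · by_cases hyv : y = (v, !β)
    · exact hne _ hy (congrArg Prod.fst hyv)
    · exact hs.2.2 y ⟨hy₁, hyv, hr', .inl he⟩
  · by_cases hyx : y.1 = x
    · obtain ⟨y₁, y₂⟩ := y
      obtain rfl : y₁ = x := hyx
      obtain rfl : y₂ = δ := Bool.ne_not.1 fun h => hy₂ (h ▸ rfl)
      exact hx.opposite_sides_notMem (!y₂) (by rwa [Bool.not_not])
    · exact hy.elim hyx fun h => h (behind_of_mem he hyx)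

lemma SepOn.separable_of_behind (hs : SepOn G.E u α v β) (hx : G.SignConsistent x) {δ : Bool}
    (hux : EdgeReach (avoidSides G.E (u, !α) (v, !β)) u x)
    (hu : Behind G x δ u) (hv : Behind G x (!δ) v) :
    Separable G u α x δ ∧ Separable G x (!δ) v β := by
  refine ⟨separable_iff_sepOn.2 (hs.sepOn_of_behind hx hux hu hv), separable_iff_sepOn.2 ?_⟩
  refine SepOn.symm (hs.symm.sepOn_of_behind hx ?_ hv (by rwa [Bool.not_not]))
  rw [avoidSides_comm]
  exact hs.2.1.symm.trans hux

lemma exists_leak_of_reach (hux : EdgeReach (avoidSides G.E (u, !α) (w, !γ)) u x) (hxw : x ≠ w)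
    {t : Side V} (h : EdgeReach (avoidVerts (avoidSides G.E (w, γ) t) {u}) x w) :
    ∃ y, Leak G.E u α w γ y := by
  obtain ⟨w, rfl, s, z, he, hz, hr⟩ := h.exists_first_edge (A := {w}) hxw (Set.mem_singleton w)
  obtain rfl : s = !γ := Bool.eq_not_iff.2 fun h => he.1.2.1 (h ▸ Sym2.mem_mk_left _ _)
  have hzu : z.1 ≠ u := he.2 z (Sym2.mem_mk_right _ _)
  refine ⟨z, fun h => hzu (congrArg Prod.fst h), fun h => hz (congrArg Prod.fst h),
    hux.trans (hr.mono ?_), .inr he.1.1⟩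
  rintro e ⟨⟨⟨he', -, -⟩, heu⟩, hew⟩
  exact ⟨he', fun h => heu _ h rfl, fun h => hew _ h rfl⟩

/-- Every walk from `w` to `v` passes `x`; running it back from `x` to `w` after reaching `x`
from `u` yields a leak of `{u α, w γ}`. -/
lemma not_sepOn_of_behind (hx : G.SignConsistent x) {ε : Bool} (hw : Behind G x ε w)
    (hu : Behind G x (!ε) u) (hv : Behind G x (!ε) v)
    (h₁ : SepOn G.E u α w γ) (h₂ : SepOn G.E w (!γ) v β) : False := by
  have hwu := hx.not_reach_of_behind hw hu
  have hux : EdgeReach (avoidSides G.E (u, !α) (w, !γ)) u x :=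
    h₁.2.1.reach_of_not_reach_avoidVerts fun h =>
      hwu (h.mono (avoidVerts_mono (avoidSides_subset _ _ _) le_rfl)).symm
  have hpos := h₂.2.1
  rw [Bool.not_not] at hpos
  obtain ⟨x, rfl, s, z, he, -, hr⟩ :=
    (hpos.avoidVerts_or_exists_first_edge (A := {x}) hw.ne).resolve_left fun h =>
      hx.not_reach_of_behind hw hv (h.mono (avoidVerts_mono (avoidSides_subset _ _ _) le_rfl))
  have hwu' : ¬ EdgeReach (avoidVerts (avoidSides G.E (w, γ) (v, !β)) {x}) w u := fun h =>
    hwu (h.mono (avoidVerts_mono (avoidSides_subset _ _ _) le_rfl))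
  have hzu : z.1 ≠ u := fun h => hwu' (h ▸ hr)
  have hfirst : s((x, s), z) ∈ avoidVerts (avoidSides G.E (w, γ) (v, !β)) {u} := by
    refine ⟨he, fun p hp => ?_⟩
    rcases Sym2.mem_iff.1 hp with rfl | rfl
    exacts [hu.ne.symm, hzu]
  obtain ⟨y, hy⟩ := exists_leak_of_reach hux hw.ne.symm <|
    EdgeReach.trans (.single (edgeAdj_of_mem hfirst))
      ((hr.avoidVerts_of_not_reach hwu').symm.mono (avoidVerts_mono (avoidVerts_subset _ _) le_rfl))
  exact h₁.2.2 y hy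

end Cutvertex

section SignCut

variable {G : BDGraph V} {x : V}

lemma scKey_of_signConsistent (hx : G.SignConsistent x) (t : Bool) : scKey G (x, t) = (x, t) := by
  simp [scKey, hx]

lemma scKey_of_not_signConsistent (hx : ¬ G.SignConsistent x) (t : Bool) :
    scKey G (x, t) = (x, true) := by
  simp [scKey, hx]

lemma edgeAdj_splitAll {y z : Side V} (he : s(y, z) ∈ G.E) :
    EdgeAdj G.splitAll.E (scKey G y) (scKey G z) :=
  ⟨y.2, z.2, _, he, by rw [Sym2.map_mk]⟩

lemma exists_of_edgeAdj_splitAll {a b : Side V} (h : EdgeAdj G.splitAll.E a b) :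
    ∃ y z, s(y, z) ∈ G.E ∧ scKey G y = a ∧ scKey G z = b := by
  obtain ⟨σ, τ, e, he, hmap⟩ := h
  induction e using Sym2.ind with
  | _ y z =>
    rw [Sym2.map_mk, Sym2.eq_iff] at hmap
    rcases hmap with ⟨hy, hz⟩ | ⟨hz, hy⟩
    · exact ⟨y, z, he, congrArg Prod.fst hy, congrArg Prod.fst hz⟩
    · exact ⟨z, y, Sym2.eq_swap ▸ he, congrArg Prod.fst hy, congrArg Prod.fst hz⟩

lemma eq_of_scKey_eq (hx : G.SignConsistent x) {y : Side V} {s : Bool}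
    (h : scKey G y = (x, s)) : y = (x, s) := by
  obtain ⟨y₁, y₂⟩ := y
  obtain rfl : y₁ = x := by simpa [scKey_fst] using congrArg Prod.fst h
  rwa [scKey_of_signConsistent hx] at h

lemma BDGraph.SignConsistent.not_reach_splitAll (hx : G.SignConsistent x) (s : Bool) :
    ¬ EdgeReach G.splitAll.E (x, s) (x, !s) := by
  intro h
  have key :=
    h.invariant (P := fun k => k = (x, s) ∨ (k.1 ≠ x ∧ Behind G x s k.1)) ?_ (.inl rfl)
  · simp at key
  rintro a b ha hab
  obtain ⟨y, ⟨z₁, z₂⟩, he, rfl, rfl⟩ := exists_of_edgeAdj_splitAll hab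
  rw [scKey_fst]
  by_cases hzx : z₁ = x
  · subst hzx
    refine .inl ((scKey_of_signConsistent hx _).trans ?_)
    rcases ha with ha | ⟨hyx, hy⟩
    · rw [eq_of_scKey_eq hx ha] at he
      obtain rfl | rfl := Bool.eq_or_eq_not z₂ s
      · rfl
      · exact absurd he (hx.opposite_sides_notMem s)
    · rw [scKey_fst] at hyx hy
      have hz : Behind G z₁ z₂ y.1 := behind_of_mem (by rwa [Sym2.eq_swap]) hyx
      rw [hx.sign_eq hz hy]
  · refine .inr ⟨hzx, ?_⟩
    rcases ha with ha | ⟨-, hy⟩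
    · rw [eq_of_scKey_eq hx ha] at he
      exact behind_of_mem (z := (z₁, z₂)) he hzx
    · rw [scKey_fst] at hy
      exact hy.tail he hzx

/-- `y` is a side of the sign-cut graph of the component of `q` in `G.splitAll`. -/
def InCut (G : BDGraph V) (q y : Side V) : Prop :=
  EdgeReach G.splitAll.E q (scKey G y)

def signCutEdges (G : BDGraph V) (q : Side V) : Set (Sym2 (Side V)) :=
  {e | e ∈ G.E ∧ ∀ y ∈ e, InCut G q y}

variable {q : Side V}

lemma signCutEdges_subset : signCutEdges G q ⊆ G.E := fun _ he => he.1

namespace InCut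

lemma of_mem {y z : Side V} (he : s(y, z) ∈ G.E) (hy : InCut G q y) : InCut G q z :=
  EdgeReach.tail hy (edgeAdj_splitAll he)

lemma mem_signCutEdges {e : Sym2 (Side V)} {y : Side V} (he : e ∈ G.E) (hy : y ∈ e)
    (hin : InCut G q y) : e ∈ signCutEdges G q := by
  refine ⟨he, fun p hp => ?_⟩
  by_cases hpy : y = p
  · exact hpy ▸ hin
  · exact hin.of_mem ((Sym2.mem_and_mem_iff hpy).1 ⟨hy, hp⟩ ▸ he)

lemma sign_eq (hx : G.SignConsistent x) {t₁ t₂ : Bool} (h₁ : InCut G q (x, t₁))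
    (h₂ : InCut G q (x, t₂)) : t₁ = t₂ := by
  by_contra hne
  rw [InCut, scKey_of_signConsistent hx] at h₁ h₂
  rw [Bool.eq_not_iff.2 (Ne.symm hne)] at h₂
  exact hx.not_reach_splitAll t₁ (h₁.symm.trans h₂)

lemma of_not_signConsistent (hx : ¬ G.SignConsistent x) {t₁ : Bool} (h : InCut G q (x, t₁))
    (t₂ : Bool) : InCut G q (x, t₂) := by
  rwa [InCut, scKey_of_not_signConsistent hx] at h ⊢

end InCut

end SignCut

section Transfer

variable {G : BDGraph V} {q : Side V} {x u v : V} {α β : Bool}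

lemma InCut.of_reach_signCut {t : Side V} {c : V}
    (h : EdgeReach (avoidSides (signCutEdges G q) (u, !α) t) u c) (huc : u ≠ c) :
    InCut G q (u, α) := by
  rcases h.cases_head with h | ⟨d, ⟨σ, τ, he, hu, -⟩, -⟩
  · exact absurd h huc
  · obtain rfl : σ = α := Bool.ne_not.1 fun h => hu (by rw [← h]; exact Sym2.mem_mk_left _ _)
    exact he.2 _ (Sym2.mem_mk_left _ _)

lemma exists_inCut_of_reach (huv : u ≠ v) (hu : InCut G q (u, α)) {c : V}
    (h : EdgeReach (avoidSides (signCutEdges G q) (u, !α) (v, !β)) u c) :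
    ∃ δ, (c, δ) ≠ (u, !α) ∧ (c, δ) ≠ (v, !β) ∧ InCut G q (c, δ) := by
  rcases h.cases_tail with rfl | ⟨b, -, σ, τ, he, h₁, h₂⟩
  · exact ⟨α, by simp, by simp [huv], hu⟩
  · exact ⟨τ, ne_of_mem_of_not_mem (Sym2.mem_mk_right _ _) h₁,
      ne_of_mem_of_not_mem (Sym2.mem_mk_right _ _) h₂, he.2 _ (Sym2.mem_mk_right _ _)⟩

lemma signConsistent_of_not_inCut (huv : u ≠ v) (hu : InCut G q (u, α)) {c : V} {σ : Bool}
    (hc : EdgeReach (avoidSides (signCutEdges G q) (u, !α) (v, !β)) u c)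
    (h₁ : (c, σ) ≠ (u, !α)) (h₂ : (c, σ) ≠ (v, !β)) (hσ : ¬ InCut G q (c, σ)) :
    c ≠ u ∧ c ≠ v ∧ G.SignConsistent c ∧ InCut G q (c, !σ) := by
  obtain ⟨δ, -, hδ₂, hδ⟩ := exists_inCut_of_reach huv hu hc
  have hσδ : σ ≠ δ := fun h => hσ (h ▸ hδ)
  refine ⟨?_, ?_, not_not.1 fun hsc => hσ (hδ.of_not_signConsistent hsc σ),
    Bool.eq_not_iff.2 hσδ.symm ▸ hδ⟩
  · rintro rfl
    exact hσ (Bool.ne_not.1 (fun h => h₁ (h ▸ rfl)) ▸ hu)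
  · rintro rfl
    exact hσδ ((Bool.ne_not.1 fun h => h₂ (h ▸ rfl)).trans
      (Bool.ne_not.1 fun h => hδ₂ (h ▸ rfl)).symm)

lemma exists_inCut_behind {d : V} (h : EdgeReach (signCutEdges G q) x d) (hd : d ≠ x) :
    ∃ s, InCut G q (x, s) ∧ Behind G x s d := by
  obtain ⟨x, rfl, s, z, he, hz, hr⟩ :=
    h.symm.exists_first_edge (A := {x}) hd (Set.mem_singleton x)
  exact ⟨s, he.2 _ (Sym2.mem_mk_left _ _), z, he.1, hz,
    (hr.mono (avoidVerts_mono signCutEdges_subset le_rfl)).symm⟩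

lemma behind_of_reach_signCut (hx : G.SignConsistent x) {δ : Bool} (hδ : InCut G q (x, δ))
    {d : V} (h : EdgeReach (signCutEdges G q) x d) (hd : d ≠ x) : Behind G x δ d := by
  obtain ⟨s, hs, hb⟩ := exists_inCut_behind h hd
  rwa [← InCut.sign_eq hx hs hδ]

lemma inCut_of_behind (hx : G.SignConsistent x) {τ : Bool} {d : V}
    (h : EdgeReach (signCutEdges G q) x d) (hb : Behind G x τ d) : InCut G q (x, τ) := by
  obtain ⟨s, hs, hb'⟩ := exists_inCut_behind h hb.ne
  rwa [hx.sign_eq hb hb']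

lemma reach_signCut_or_behind (hs : SepOn (signCutEdges G q) u α v β) {c : V}
    (hc : EdgeReach (avoidSides G.E (u, !α) (v, !β)) u c) :
    EdgeReach (avoidSides (signCutEdges G q) (u, !α) (v, !β)) u c ∨
      ∃ x τ, EdgeReach (avoidSides (signCutEdges G q) (u, !α) (v, !β)) u x ∧
        x ≠ u ∧ x ≠ v ∧ G.SignConsistent x ∧ ¬ InCut G q (x, τ) ∧
        Behind G x τ c := by
  have hu := InCut.of_reach_signCut hs.2.1 hs.1
  refine hc.invariant (P := fun c =>
    EdgeReach (avoidSides (signCutEdges G q) (u, !α) (v, !β)) u c ∨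
      ∃ x τ, EdgeReach (avoidSides (signCutEdges G q) (u, !α) (v, !β)) u x ∧
        x ≠ u ∧ x ≠ v ∧ G.SignConsistent x ∧ ¬ InCut G q (x, τ) ∧ Behind G x τ c)
    ?_ (.inl (.refl u))
  rintro a b (ha | ⟨x, τ, hx, hxu, hxv, hsc, hτ, hb⟩) ⟨σ, σ', he, h₁, h₂⟩
  · by_cases hin : InCut G q (a, σ)
    · exact .inl <|
        ha.tail ⟨σ, σ', hin.mem_signCutEdges he (Sym2.mem_mk_left _ _), h₁, h₂⟩
    by_cases hba : b = a
    · exact .inl (hba ▸ ha)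
    obtain ⟨hau, hav, hsc, -⟩ := signConsistent_of_not_inCut hs.1 hu ha
      (ne_of_mem_of_not_mem (Sym2.mem_mk_left _ _) h₁)
      (ne_of_mem_of_not_mem (Sym2.mem_mk_left _ _) h₂) hin
    exact .inr ⟨a, σ, ha, hau, hav, hsc, hin, behind_of_mem (z := (b, σ')) he hba⟩
  · by_cases hbx : b = x
    · exact .inl (hbx ▸ hx)
    · exact .inr ⟨x, τ, hx, hxu, hxv, hsc, hτ, hb.tail (y := (a, σ)) (w := (b, σ')) he hbx⟩

lemma SepOn.of_signCutEdges (hs : SepOn (signCutEdges G q) u α v β) : SepOn G.E u α v β := by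
  refine ⟨hs.1, hs.2.1.mono (avoidSides_mono signCutEdges_subset _ _), ?_⟩
  rintro y ⟨hy₁, hy₂, hr, he⟩
  have hu := InCut.of_reach_signCut hs.2.1 hs.1
  have hreach : ∀ c, EdgeReach (avoidSides (signCutEdges G q) (u, !α) (v, !β)) u c →
      ∀ d, EdgeReach (avoidSides (signCutEdges G q) (u, !α) (v, !β)) u d →
      EdgeReach (signCutEdges G q) c d :=
    fun c hc d hd => (hc.symm.trans hd).mono (avoidSides_subset _ _ _)
  obtain ⟨t, hyt, ht, htuv⟩ : ∃ t : Side V, s(y, t) ∈ G.E ∧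
      EdgeReach (avoidSides (signCutEdges G q) (u, !α) (v, !β)) u t.1 ∧ (t.1 = u ∨ t.1 = v) :=
    he.elim (fun he => ⟨_, Sym2.eq_swap ▸ he, .refl u, .inl rfl⟩)
      (fun he => ⟨_, Sym2.eq_swap ▸ he, hs.2.1, .inr rfl⟩)
  rcases reach_signCut_or_behind hs hr with hA | ⟨x, τ, hx, hxu, hxv, hsc, hτ, hb⟩
  · by_cases hin : InCut G q y
    · exact hs.2.2 y ⟨hy₁, hy₂, hA, he.imp
        (fun h => hin.mem_signCutEdges h (Sym2.mem_mk_right _ _))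
        (fun h => hin.mem_signCutEdges h (Sym2.mem_mk_right _ _))⟩
    obtain ⟨hyu, hyv, hsc, -⟩ := signConsistent_of_not_inCut hs.1 hu hA hy₁ hy₂ hin
    have hty : t.1 ≠ y.1 := by rcases htuv with h | h <;> rw [h] <;> exact Ne.symm ‹_›
    exact hin (inCut_of_behind hsc (hreach _ hA _ ht) (behind_of_mem hyt hty))
  · have htx : t.1 ≠ x := by rcases htuv with h | h <;> rw [h] <;> exact Ne.symm ‹_›
    exact hτ (inCut_of_behind hsc (hreach _ hx _ ht) (hb.tail hyt htx))

lemma exists_behind_of_not_reach (huv : u ≠ v) (hu : InCut G q (u, α)) {w : V}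
    (hw : EdgeReach (avoidSides G.E (u, !α) (v, !β)) u w)
    (hwF : ¬ EdgeReach (avoidSides (signCutEdges G q) (u, !α) (v, !β)) u w) :
    ∃ x σ, G.SignConsistent x ∧ x ≠ u ∧ x ≠ v ∧
      EdgeReach (avoidSides (signCutEdges G q) (u, !α) (v, !β)) u x ∧
      InCut G q (x, !σ) ∧ Behind G x σ w := by
  obtain ⟨x, hx, σ, z, he, hz, hr⟩ := hw.symm.exists_first_edge
    (A := {c | EdgeReach (avoidSides (signCutEdges G q) (u, !α) (v, !β)) u c}) hwF (.refl u)
  have hin : ¬ InCut G q (x, σ) := fun hin =>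
    hz (hx.tail ⟨σ, z.2, hin.mem_signCutEdges he.1 (Sym2.mem_mk_left _ _), he.2⟩)
  obtain ⟨hxu, hxv, hsc, hx'⟩ := signConsistent_of_not_inCut huv hu hx
    (ne_of_mem_of_not_mem (Sym2.mem_mk_left _ _) he.2.1)
    (ne_of_mem_of_not_mem (Sym2.mem_mk_left _ _) he.2.2) hin
  refine ⟨x, σ, hsc, hxu, hxv, hx, hx', z, he.1, fun h => hz (h ▸ hx), ?_⟩
  exact (hr.mono (avoidVerts_mono (avoidSides_subset _ _ _) (Set.singleton_subset_iff.2 hx))).symm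

lemma SepOn.reach_signCut_of_witness (hsF : SepOn (signCutEdges G q) u α v β) {w : V} {γ : Bool}
    (hw : EdgeReach (avoidSides G.E (u, !α) (v, !β)) u w)
    (h₁ : SepOn G.E u α w γ) (h₂ : SepOn G.E w (!γ) v β) :
    EdgeReach (avoidSides (signCutEdges G q) (u, !α) (v, !β)) u w := by
  by_contra hwF
  have hu := InCut.of_reach_signCut hsF.2.1 hsF.1
  obtain ⟨x, σ, hx, hxu, hxv, hux, hx', hwb⟩ := exists_behind_of_not_reach hsF.1 hu hw hwF
  have hxF := (hux.mono (avoidSides_subset _ _ _)).symm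
  exact not_sepOn_of_behind hx hwb (behind_of_reach_signCut hx hx' hxF hxu.symm)
    (behind_of_reach_signCut hx hx' (hxF.trans (hsF.2.1.mono (avoidSides_subset _ _ _))) hxv.symm)
    h₁ h₂

lemma IsSnarl.reach_signCut (h : IsSnarl G u α v β) (hu : InCut G q (u, α)) :
    EdgeReach (avoidSides (signCutEdges G q) (u, !α) (v, !β)) u v := by
  obtain ⟨hsep, hmin⟩ := h
  have hs := separable_iff_sepOn.1 hsep
  by_contra hv
  obtain ⟨x, σ, hx, hxu, hxv, hux, hx', hvb⟩ := exists_behind_of_not_reach hs.1 hu hs.2.1 hv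
  have hux' := hux.mono (avoidSides_mono signCutEdges_subset _ _)
  have hub : Behind G x (!σ) u :=
    behind_of_reach_signCut hx hx' (hux.mono (avoidSides_subset _ _ _)).symm hxu.symm
  exact hmin ⟨x, hs.mem_snarlVerts_iff.2 hux', hxu, hxv, !σ,
    hs.separable_of_behind hx hux' hub (by rwa [Bool.not_not])⟩

end Transfer

section Main

variable {G : BDGraph V} {q : Side V} {u v : V} {α β : Bool}

noncomputable def signCutGraph (G : BDGraph V) (q : Side V) : BDGraph V where
  verts := {w | ∃ σ : Bool, (w, σ) ∈ G.splitAll.verts ∧ G.splitAll.uReach q (w, σ)}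
  E := signCutEdges G q
  wf e he y hy := by
    refine ⟨(scKey G y).2, ?_⟩
    rw [show ((y.1, (scKey G y).2) : Side V) = scKey G y by rw [← scKey_fst G y],
      BDGraph.uReach_eq]
    exact ⟨⟨by rw [scKey_fst]; exact G.wf e he.1 y hy, scKey_idem G y⟩, he.2 y hy⟩

lemma isSignCutGraph_signCutGraph (hq : q ∈ G.splitAll.verts) :
    IsSignCutGraph G (signCutGraph G q) :=
  ⟨q, hq, rfl, by simp only [signCutGraph, signCutEdges, InCut, BDGraph.uReach_eq]⟩

lemma IsSignCutGraph.exists_eq_signCutEdges {F : BDGraph V} (hF : IsSignCutGraph G F) :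
    ∃ q, F.E = signCutEdges G q := by
  obtain ⟨q, -, -, hE⟩ := hF
  exact ⟨q, by rw [hE, BDGraph.uReach_eq]; rfl⟩

lemma isSnarl_iff_of_signCut {F : BDGraph V} (hF : F.E = signCutEdges G q)
    (hsF : SepOn F.E u α v β) : IsSnarl G u α v β ↔ IsSnarl F u α v β := by
  have hmemF := fun w => hsF.mem_snarlVerts_iff (w := w)
  rw [hF] at hsF hmemF
  have hs := hsF.of_signCutEdges
  simp only [IsSnarl, separable_iff_sepOn, hF, hs, hsF, hmemF,
    fun w => hs.mem_snarlVerts_iff (w := w), true_and]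
  constructor
  · rintro hmin ⟨w, hw, hwu, hwv, γ, h₁, h₂⟩
    exact hmin ⟨w, hw.mono (avoidSides_mono signCutEdges_subset _ _), hwu, hwv, γ,
      h₁.of_signCutEdges, h₂.of_signCutEdges⟩
  · rintro hmin ⟨w, hw, hwu, hwv, γ, h₁, h₂⟩
    have hwF := hsF.reach_signCut_of_witness hw h₁ h₂
    refine hmin ⟨w, hwF, hwu, hwv, γ, h₁.of_subset_of_reach signCutEdges_subset hwF, ?_⟩
    refine (h₂.symm.of_subset_of_reach signCutEdges_subset (t := (u, !α)) ?_).symm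
    rw [avoidSides_comm]
    exact hsF.2.1.symm.trans hwF

end Main

/-- `{u α, v β}` is a snarl of `G` iff there is a sign-cut graph `F`
of `G` such that `{u α, v β}` is a snarl of `F`. -/
theorem statement_11 (G : BDGraph V) (u v : V) (α β : Bool) :
    IsSnarl G u α v β ↔ ∃ F : BDGraph V, IsSignCutGraph G F ∧ IsSnarl F u α v β := by
  constructor
  · intro h
    have hs := separable_iff_sepOn.1 h.1
    have hu : InCut G (scKey G (u, α)) (u, α) := .refl _
    have hsF := hs.of_subset_of_reach signCutEdges_subset (h.reach_signCut hu)
    refine ⟨signCutGraph G (scKey G (u, α)), isSignCutGraph_signCutGraph ?_,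
      (isSnarl_iff_of_signCut rfl hsF).1 h⟩
    exact ⟨by rw [scKey_fst]; exact hs.left_mem_verts, scKey_idem G _⟩
  · rintro ⟨F, hF, h⟩
    obtain ⟨q, hq⟩ := hF.exists_eq_signCutEdges
    exact (isSnarl_iff_of_signCut hq (separable_iff_sepOn.1 h.1)).2 h

end Paper
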